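/- arXiv:2209.14168 — 2 statements merged into one kernel-verified Lean document; each statement's English description precedes it below -/
import Mathlib

section
/- For every real a with 0 < a < 1, the map ψ_a(z₁,z₂) = ((1-a²)^{1/4} (1 - a z₂)^{-1/2} z₁, (z₂ - a)/(1 - a z₂)) maps the domain E = {(z₁,z₂) ∈ ℂ² : |z₂|² + |z₁|⁴ < 1} into itself; more precisely, for (z₁,z₂) ∈ E one has |ψ_a(z)₂|² + |ψ_a(z)₁|⁴ < 1. -/
/-!
The identity `|1 - ā w|² - |w - a|² = (1 - |a|²)(1 - |w|²)` behind the invariance of the unit disc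
under Möbius maps turns the claim, for real `a`, into `(1 - a²)|z₁|⁴ < (1 - a²)(1 - |z₂|²)`, which is
the defining inequality of `E` scaled by `1 - a² > 0`.
-/

open ComplexConjugate

theorem Complex.normSq_one_sub_conj_mul_sub_normSq_sub (a w : ℂ) :
    normSq (1 - conj a * w) - normSq (w - a) = (1 - normSq a) * (1 - normSq w) := by
  simp only [normSq_apply, sub_re, sub_im, mul_re, mul_im, conj_re, conj_im, one_re, one_im]
  ring

theorem Complex.norm_one_sub_ofReal_mul_sq_sub_norm_sub_sq (a : ℝ) (w : ℂ) :
    ‖1 - (a : ℂ) * w‖ ^ 2 - ‖w - a‖ ^ 2 = (1 - a ^ 2) * (1 - ‖w‖ ^ 2) := by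
  have h := normSq_one_sub_conj_mul_sub_normSq_sub a w
  rwa [conj_ofReal, normSq_ofReal, ← sq, ← Complex.sq_norm, ← Complex.sq_norm,
    ← Complex.sq_norm] at h

/-- For `0 < a < 1`, the map
`ψ_a(z₁,z₂) = ((1-a²)^{1/4}(1 - a z₂)^{-1/2} z₁, (z₂-a)/(1-a z₂))` maps
`E = {|z₂|² + |z₁|⁴ < 1}` into itself; in terms of moduli,
`|ψ_a(z)₂|² + |ψ_a(z)₁|⁴ = |z₂-a|²/|1-a z₂|² + (1-a²)|z₁|⁴/|1-a z₂|² < 1`. -/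
theorem stmt_2 (a : ℝ) (ha0 : 0 < a) (ha1 : a < 1) (z : ℂ × ℂ)
    (hz : ‖z.2‖ ^ 2 + ‖z.1‖ ^ 4 < 1) :
    (‖z.2 - (a : ℂ)‖ / ‖1 - (a : ℂ) * z.2‖) ^ 2 +
      (1 - a ^ 2) * ‖z.1‖ ^ 4 / ‖1 - (a : ℂ) * z.2‖ ^ 2 < 1 := by
  have hmobius := Complex.norm_one_sub_ofReal_mul_sq_sub_norm_sub_sq a z.2
  have ha : 0 < 1 - a ^ 2 := by nlinarith
  have hscaled : (1 - a ^ 2) * ‖z.1‖ ^ 4 < (1 - a ^ 2) * (1 - ‖z.2‖ ^ 2) :=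
    mul_lt_mul_of_pos_left (by linarith) ha
  have hden : 0 < ‖1 - (a : ℂ) * z.2‖ ^ 2 := by
    linarith [sq_nonneg ‖z.2 - a‖, mul_nonneg ha.le (by positivity : (0 : ℝ) ≤ ‖z.1‖ ^ 4)]
  rw [div_pow, ← add_div, div_lt_one hden]
  linarith
end

section
/- Let 0 < b < 1, s = 1 - b, and 0 < a < 1. For complex numbers z_n with |z_n| < 1 (so that 1 + a z_n ≠ 0) and t ≥ 0, the inequality |(z_n + a)/(1 + a z_n) - b|² + s · t · (1 - a²)/|1 + a z_n|² < s² holds if and only if |z_n - b(1-a)/(1 + a - 2ab)|² + (1-b)(1+a)/(1 + a - 2ab) · t < (1 + a - 2b)/(1 + a - 2ab) + b²(1-a)²/(1 + a - 2ab)². -/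
/-! Clearing the denominator `‖1 + a z‖²`, the left-hand condition becomes `(1 - a) Q(z) < 0` for the
real quadratic form `Q(z) = c‖z‖² - 2b(1-a) Re z + (1-b)(1+a) t - (1+a-2b)` with `c = 1 + a - 2ab`;
completing the square in `Q(z)/c` gives the right-hand condition. Both `1 - a` and `c` are positive. -/

open Complex

lemma norm_sq_ofReal_mul_add_ofReal (r p : ℝ) (z : ℂ) :
    ‖(r : ℂ) * z + p‖ ^ 2 = r ^ 2 * ‖z‖ ^ 2 + 2 * r * p * z.re + p ^ 2 := by
  simp only [Complex.sq_norm, normSq_apply, add_re, add_im, mul_re, mul_im, ofReal_re, ofReal_im]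
  ring

lemma norm_mobius_sub_sq_add_lt_iff (a b t : ℝ) (z : ℂ) (ha : a < 1) (hz : 1 + (a : ℂ) * z ≠ 0) :
    (‖(z + a) / (1 + a * z) - b‖ ^ 2 + (1 - b) * t * (1 - a ^ 2) / ‖1 + (a : ℂ) * z‖ ^ 2
        < (1 - b) ^ 2) ↔
      (1 + a - 2 * a * b) * ‖z‖ ^ 2 - 2 * b * (1 - a) * z.re + (1 - b) * (1 + a) * t
        - (1 + a - 2 * b) < 0 := by
  have hD : 0 < ‖1 + (a : ℂ) * z‖ ^ 2 := by positivity
  have hnum : (z + a) / (1 + a * z) - b =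
      (((1 - a * b : ℝ) : ℂ) * z + ((a - b : ℝ) : ℂ)) / (1 + a * z) := by
    rw [eq_div_iff hz, sub_mul, div_mul_cancel₀ _ hz]
    push_cast
    ring
  have hden : (1 : ℂ) + a * z = (a : ℂ) * z + ((1 : ℝ) : ℂ) := by push_cast; ring
  rw [hnum, norm_div, div_pow, ← add_div, div_lt_iff₀ hD, ← sub_neg, hden,
    norm_sq_ofReal_mul_add_ofReal, norm_sq_ofReal_mul_add_ofReal]
  convert mul_lt_mul_iff_of_pos_left (sub_pos.2 ha) using 2 <;> ring

lemma norm_sub_sq_add_lt_iff (c β γ k t : ℝ) (z : ℂ) (hc : 0 < c) :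
    ‖z - ((β / c : ℝ) : ℂ)‖ ^ 2 + k / c * t < γ / c + β ^ 2 / c ^ 2 ↔
      c * ‖z‖ ^ 2 - 2 * β * z.re + k * t - γ < 0 := by
  have hshift : z - ((β / c : ℝ) : ℂ) = ((1 : ℝ) : ℂ) * z + ((-(β / c) : ℝ) : ℂ) := by
    push_cast
    ring
  have hsquare : ‖z - ((β / c : ℝ) : ℂ)‖ ^ 2 + k / c * t - (γ / c + β ^ 2 / c ^ 2) =
      (c * ‖z‖ ^ 2 - 2 * β * z.re + k * t - γ) / c := by
    rw [hshift, norm_sq_ofReal_mul_add_ofReal]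
    field_simp
    ring
  rw [← sub_neg, hsquare, div_lt_iff₀ hc, zero_mul]

theorem stmt_5_general (b : ℝ) (hb1 : b < 1) (s : ℝ) (hs : s = 1 - b)
    (a : ℝ) (ha0 : 0 < a) (ha1 : a < 1) (zn : ℂ) (hzn : ‖zn‖ < 1)
    (t : ℝ) :
    (‖(zn + (a : ℂ)) / (1 + (a : ℂ) * zn) - (b : ℂ)‖ ^ 2 +
        s * t * (1 - a ^ 2) / ‖1 + (a : ℂ) * zn‖ ^ 2 < s ^ 2) ↔
    (‖zn - ((b * (1 - a) / (1 + a - 2 * a * b) : ℝ) : ℂ)‖ ^ 2 +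
        (1 - b) * (1 + a) / (1 + a - 2 * a * b) * t
      < (1 + a - 2 * b) / (1 + a - 2 * a * b) +
          b ^ 2 * (1 - a) ^ 2 / (1 + a - 2 * a * b) ^ 2) := by
  subst hs
  have hc : 0 < 1 + a - 2 * a * b := by nlinarith [mul_pos ha0 (sub_pos.2 hb1)]
  have hz : 1 + (a : ℂ) * zn ≠ 0 := by
    intro h
    have hnorm := congrArg norm (eq_neg_of_add_eq_zero_right h)
    rw [norm_mul, Complex.norm_real, Real.norm_of_nonneg ha0.le, norm_neg, norm_one] at hnorm
    nlinarith
  rw [norm_mobius_sub_sq_add_lt_iff a b t zn ha1 hz, ← mul_pow, norm_sub_sq_add_lt_iff _ _ _ _ _ _ hc,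
    mul_assoc 2 b]

/-- the algebraic identity underlying Lemma 3.1: for `0 < b < 1`,
`s = 1 - b`, `0 < a < 1`, `|z_n| < 1` and `t ≥ 0`,
`|(z_n+a)/(1+a z_n) - b|² + s t (1-a²)/|1+a z_n|² < s²` iff
`|z_n - b(1-a)/(1+a-2ab)|² + (1-b)(1+a)/(1+a-2ab) · t
    < (1+a-2b)/(1+a-2ab) + b²(1-a)²/(1+a-2ab)²`. -/
theorem stmt_5 (b : ℝ) (hb0 : 0 < b) (hb1 : b < 1) (s : ℝ) (hs : s = 1 - b)
    (a : ℝ) (ha0 : 0 < a) (ha1 : a < 1) (zn : ℂ) (hzn : ‖zn‖ < 1)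
    (t : ℝ) (ht : 0 ≤ t) :
    (‖(zn + (a : ℂ)) / (1 + (a : ℂ) * zn) - (b : ℂ)‖ ^ 2 +
        s * t * (1 - a ^ 2) / ‖1 + (a : ℂ) * zn‖ ^ 2 < s ^ 2) ↔
    (‖zn - ((b * (1 - a) / (1 + a - 2 * a * b) : ℝ) : ℂ)‖ ^ 2 +
        (1 - b) * (1 + a) / (1 + a - 2 * a * b) * t
      < (1 + a - 2 * b) / (1 + a - 2 * a * b) +
          b ^ 2 * (1 - a) ^ 2 / (1 + a - 2 * a * b) ^ 2) :=
  stmt_5_general b hb1 s hs a ha0 ha1 zn hzn t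
end
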